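/- arXiv:1601.01140 — 2 statements merged into one kernel-verified Lean document; each statement's English description precedes it below -/
import Mathlib

section
/- (Pointwise residual bound for regularized NE-HPE) Under the setting and notation of the previous contraction result, for every k ≥ 1: ‖r_k‖* ≤ (2√2 M)/(λ√m) · (1-τ̲)^{(k-1)/2} · (d̲₀ + η₀)^{1/2} and ε_k ≤ (1/(λ(1-σ))) (1-τ̲)^{k-1} (d̲₀ + η₀), where d̲₀ := inf{(dw)_{z₀}(z) : 0 ∈ (S+T)(z)}. -/
/-!
Fix a solution `z*`. The four-point identity of the Bregman distance `D`, the
`μ`-monotonicity of `S`, the `ε`-enlargement inequality and the error criterion give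
`D(z_k, z*) + η_k + (1-σ) D(z_{k-1}, z̃_k) + λμ (D(z̃_k, z*) + D(z*, z̃_k))`
`≤ D(z_{k-1}, z*) + (1-τ) η_{k-1}`.
By the three-point inequality, `(m, M)`-regularity and AM-GM, the discarded terms dominate
`τ̲ D(z_{k-1}, z*)`, so `D(z_k, z*) + η_k` contracts by the factor `1 - τ̲`. The residual is at
most `(M/λ) ‖z_{k-1} - z_k‖`, which strong convexity bounds by `D(z_{k-1}, z*) + D(z_k, z*)`,
and `ε_k` is read off the error criterion. Both bounds hold for every solution, hence for the
infimum `d̲₀`.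
-/

open RealInnerProductSpace

theorem mul_mul_le_of_sq_le {α β c a b : ℝ} (hβ : 0 < β) (h : c ^ 2 ≤ 4 * α * β) :
    c * a * b ≤ α * a ^ 2 + β * b ^ 2 := by
  nlinarith [sq_nonneg (2 * β * b - c * a), mul_nonneg (sub_nonneg.2 h) (sq_nonneg a)]

/-- The scalar core of the contraction estimate: `s` and `u` are the weights `1 - σ` and `μ λ`,
`a` and `b` the seminorm distances in the three-point inequality `W ≤ X + Y + M a b`. -/
theorem mul_le_of_three_point_le {m M s u t a b X Y Z W : ℝ} (hm : 0 < m) (hM : 0 < M)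
    (hmM : m ≤ M) (hs : 0 < s) (hu : 0 < u) (ht : 0 ≤ t) (htM : t ≤ m / M * (1 / s + 1 / u)⁻¹)
    (hX : m / 2 * a ^ 2 ≤ X) (hY : 0 ≤ Y) (hZ : m / 2 * b ^ 2 ≤ Z)
    (hW : W ≤ X + Y + M * a * b) :
    t * W ≤ s * X + u * Y + u * Z := by
  set q := (1 / s + 1 / u)⁻¹
  have hq : q * (s + u) = s * u := by
    simp only [q]; field_simp; ring
  have hq0 : 0 < q := by positivity
  have htq : t * M ≤ m * q := by
    rwa [div_mul_eq_mul_div, le_div_iff₀ hM] at htM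
  have htq' : t ≤ q := by nlinarith
  have hqs : q ≤ s := by nlinarith
  have hqu : q ≤ u := by nlinarith
  have hsq : (t * M) ^ 2 ≤ 4 * ((s - t) * (m / 2)) * (u * (m / 2)) :=
    calc (t * M) ^ 2 ≤ (m * q) ^ 2 := pow_le_pow_left₀ (by positivity) htq 2
      _ = m ^ 2 * (q * q) := by ring
      _ ≤ m ^ 2 * ((s - t) * u) := mul_le_mul_of_nonneg_left (by nlinarith) (sq_nonneg m)
      _ = 4 * ((s - t) * (m / 2)) * (u * (m / 2)) := by ring
  have hamgm := mul_mul_le_of_sq_le (a := a) (b := b) (by positivity) hsq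
  nlinarith [mul_le_mul_of_nonneg_left hX (sub_nonneg.2 (htq'.trans hqs)),
    mul_le_mul_of_nonneg_left hZ hu.le, mul_le_mul_of_nonneg_right (htq'.trans hqu) hY,
    mul_le_mul_of_nonneg_left hW ht]

theorem le_mul_csInf_add {s : Set ℝ} {a b c : ℝ} (h : ∀ x ∈ s, a ≤ b * (x + c))
    (hs : s.Nonempty) (hb : 0 < b) : a ≤ b * (sInf s + c) := by
  have : a / b - c ≤ sInf s := le_csInf hs fun x hx => by
    rw [sub_le_iff_le_add, div_le_iff₀' hb]; exact h x hx
  rwa [sub_le_iff_le_add, div_le_iff₀' hb] at this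

theorem le_two_mul_sqrt_two_div_sqrt_mul_sqrt {m a C : ℝ} (hm : 0 < m) (h : m * a ^ 2 ≤ 8 * C) :
    a ≤ 2 * √2 / √m * √C := by
  have hC : 0 ≤ C := by nlinarith [sq_nonneg a]
  refine (le_abs_self a).trans (abs_le_of_sq_le_sq ?_ (by positivity))
  rw [div_mul_eq_mul_div, div_pow, mul_pow, mul_pow, Real.sq_sqrt zero_le_two, Real.sq_sqrt hC,
    Real.sq_sqrt hm.le, le_div_iff₀ hm]
  linarith

theorem rpow_natCast_add_one_sub_one_div_two {x : ℝ} (hx : 0 ≤ x) (k : ℕ) :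
    x ^ ((((k + 1 : ℕ) : ℝ) - 1) / 2) = √(x ^ k) := by
  rw [Real.sqrt_eq_rpow, ← Real.rpow_natCast, ← Real.rpow_mul hx]
  push_cast
  ring_nf

section Bregman

variable {E : Type*} [NormedAddCommGroup E] [InnerProductSpace ℝ E] {w : E → ℝ} {g : E → E}

/-- The Bregman distance `(dw)_z(z')`; `g` stands for `∇w`. -/
def bregman (w : E → ℝ) (g : E → E) (z z' : E) : ℝ :=
  w z' - w z - ⟪g z, z' - z⟫

theorem bregman_add_bregman (x y : E) :
    bregman w g x y + bregman w g y x = ⟪g x - g y, x - y⟫ := by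
  simp only [bregman, inner_sub_left, inner_sub_right]; ring

theorem bregman_three_point (x y z : E) :
    bregman w g x z = bregman w g x y + bregman w g y z + ⟪g y - g x, z - y⟫ := by
  simp only [bregman, inner_sub_left, inner_sub_right]; ring

theorem bregman_four_point (x x' y z : E) :
    bregman w g x z - bregman w g x' z - bregman w g x y + bregman w g x' y =
      ⟪g x - g x', y - z⟫ := by
  simp only [bregman, inner_sub_left, inner_sub_right]; ring

/-- `(m, M)`-regularity of the distance-generating function `w` on `Zs`; the second field is
`‖g z - g z'‖_* ≤ M p (z - z')` with the dual seminorm unfolded. -/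
structure IsRegularDGF (w : E → ℝ) (g : E → E) (Zs : Set E) (p : Seminorm ℝ E) (m M : ℝ) :
    Prop where
  lower : ∀ z ∈ Zs, ∀ z' ∈ Zs, m / 2 * p (z - z') ^ 2 ≤ bregman w g z z'
  upper : ∀ z ∈ Zs, ∀ z' ∈ Zs, ∀ u : E, ⟪g z - g z', u⟫ ≤ M * p (z - z') * p u

namespace IsRegularDGF

variable {Zs : Set E} {p : Seminorm ℝ E} {m M : ℝ} {x y z : E}

theorem bregman_nonneg (h : IsRegularDGF w g Zs p m M) (hm : 0 ≤ m) (hx : x ∈ Zs) (hy : y ∈ Zs) :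
    0 ≤ bregman w g x y :=
  le_trans (by positivity) (h.lower x hx y hy)

theorem bregman_le (h : IsRegularDGF w g Zs p m M) (hm : 0 ≤ m) (hx : x ∈ Zs) (hy : y ∈ Zs) :
    bregman w g x y ≤ M * p (x - y) ^ 2 := by
  have := h.upper x hx y hy (x - y)
  have := h.bregman_nonneg hm hy hx
  linarith [bregman_add_bregman (w := w) (g := g) x y]

theorem mul_sq_le (h : IsRegularDGF w g Zs p m M) (hx : x ∈ Zs) (hy : y ∈ Zs) :
    m * p (x - y) ^ 2 ≤ M * p (x - y) ^ 2 := by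
  have := h.lower y hy x hx
  rw [map_sub_rev] at this
  linarith [h.lower x hx y hy, h.upper x hx y hy (x - y), bregman_add_bregman (w := w) (g := g) x y]

theorem bregman_eq_zero_of_lt (h : IsRegularDGF w g Zs p m M) (hm : 0 ≤ m) (hMm : M < m)
    (hx : x ∈ Zs) (hy : y ∈ Zs) : bregman w g x y = 0 := by
  have hp : p (x - y) ^ 2 = 0 := by nlinarith [h.mul_sq_le hx hy, sq_nonneg (p (x - y))]
  have := h.bregman_le hm hx hy
  rw [hp, mul_zero] at this
  exact le_antisymm this (h.bregman_nonneg hm hx hy)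

theorem bregman_le_add_add (h : IsRegularDGF w g Zs p m M) (hx : x ∈ Zs) (hy : y ∈ Zs) (z : E) :
    bregman w g x z ≤ bregman w g x y + bregman w g y z + M * p (x - y) * p (z - y) := by
  have := h.upper y hy x hx (z - y)
  rw [map_sub_rev] at this
  linarith [bregman_three_point (w := w) (g := g) x y z]

theorem mul_sq_seminorm_sub_le (h : IsRegularDGF w g Zs p m M) (hm : 0 ≤ m) {x' : E}
    (hx : x ∈ Zs) (hx' : x' ∈ Zs) (hz : z ∈ Zs) :
    m * p (x - x') ^ 2 ≤ 4 * (bregman w g x z + bregman w g x' z) := by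
  have htri : p (x - x') ≤ p (x - z) + p (x' - z) := by
    simpa [map_sub_rev p x' z] using map_add_le_add p (x - z) (z - x')
  have hsq : p (x - x') ^ 2 ≤ 2 * p (x - z) ^ 2 + 2 * p (x' - z) ^ 2 := by
    nlinarith [apply_nonneg p (x - x'), sq_nonneg (p (x - z) - p (x' - z))]
  nlinarith [h.lower x hx z hz, h.lower x' hx' z hz]

theorem mul_bregman_le (h : IsRegularDGF w g Zs p m M) (hm : 0 < m) (hM : 0 < M) {s u t : ℝ}
    (hs : 0 < s) (hu : 0 < u) (ht : 0 ≤ t) (htM : t ≤ m / M * (1 / s + 1 / u)⁻¹) {x y z : E}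
    (hx : x ∈ Zs) (hy : y ∈ Zs) (hz : z ∈ Zs) :
    t * bregman w g x z ≤ s * bregman w g x y + u * bregman w g y z + u * bregman w g z y := by
  rcases le_or_gt m M with hmM | hMm
  · refine mul_le_of_three_point_le hm hM hmM hs hu ht htM (h.lower x hx y hy)
      (h.bregman_nonneg hm.le hy hz) ?_ (h.bregman_le_add_add hx hy z)
    simpa only [map_sub_rev p z y] using h.lower z hz y hy
  · simp [h.bregman_eq_zero_of_lt hm.le hMm, hx, hy, hz]

end IsRegularDGF

end Bregman

section Framework

variable {E : Type*} [NormedAddCommGroup E] [InnerProductSpace ℝ E] {w : E → ℝ} {g : E → E}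
  {Zs : Set E} {S T : E → Set E}

/-- The `ε`-enlargement `T^{[ε]}(z)`. -/
def enlargement (T : E → Set E) (ε : ℝ) (z : E) : Set E :=
  {v | ∀ z' v', v' ∈ T z' → -ε ≤ ⟪v - v', z - z'⟫}

def IsStronglyMonotoneWrt (S : E → Set E) (w : E → ℝ) (g : E → E) (μ : ℝ) (Zs : Set E) :
    Prop :=
  ∀ z ∈ Zs, ∀ z' ∈ Zs, ∀ s ∈ S z, ∀ s' ∈ S z',
    μ * (bregman w g z z' + bregman w g z' z) ≤ ⟪z - z', s - s'⟫

theorem IsStronglyMonotoneWrt.le_inner_add {μ ε : ℝ} (hS : IsStronglyMonotoneWrt S w g μ Zs)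
    {y zs ra rb a b : E} (hy : y ∈ Zs) (hzs : zs ∈ Zs) (hra : ra ∈ S y)
    (hrb : rb ∈ enlargement T ε y) (ha : a ∈ S zs) (hb : b ∈ T zs) (hab : a + b = 0) :
    μ * (bregman w g y zs + bregman w g zs y) - ε ≤ ⟪ra + rb, y - zs⟫ := by
  have hmono := hS y hy zs hzs ra hra a ha
  have henl := hrb zs b hb
  rw [eq_neg_of_add_eq_zero_right hab] at henl
  simp only [inner_add_left, inner_sub_left, inner_sub_right, inner_neg_left] at hmono henl ⊢
  linarith [real_inner_comm y ra, real_inner_comm zs ra, real_inner_comm y a, real_inner_comm zs a]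

/-- The iterates of the regularized NE-HPE framework, with indices shifted so that step `k + 1`
goes from `z k` to `z (k + 1)` through `zt (k + 1)`. -/
structure IsNEHPESeq (w : E → ℝ) (g : E → E) (Zs : Set E) (S T : E → Set E) (lam σ τ : ℝ)
    (z zt : ℕ → E) (lamk ε η : ℕ → ℝ) (r : ℕ → E) : Prop where
  mem_z : ∀ k, z k ∈ Zs
  mem_zt : ∀ k, zt k ∈ Zs
  le_lamk : ∀ k, lam ≤ lamk k
  eps_nonneg : ∀ k, 0 ≤ ε k
  eta_nonneg : ∀ k, 0 ≤ η k
  residual_eq : ∀ k, r (k + 1) = (1 / lamk (k + 1)) • (g (z k) - g (z (k + 1)))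
  residual_mem : ∀ k, ∃ ra rb : E, ra ∈ S (zt (k + 1)) ∧
    rb ∈ enlargement T (ε (k + 1)) (zt (k + 1)) ∧ r (k + 1) = ra + rb
  error_le : ∀ k, bregman w g (z (k + 1)) (zt (k + 1)) + lamk (k + 1) * ε (k + 1) + η (k + 1) ≤
    σ * bregman w g (z k) (zt (k + 1)) + (1 - τ) * η k

namespace IsNEHPESeq

variable {p : Seminorm ℝ E} {m M μ lam σ τ t : ℝ} {z zt : ℕ → E} {lamk ε η : ℕ → ℝ}
  {r : ℕ → E}

theorem mul_inner_residual (h : IsNEHPESeq w g Zs S T lam σ τ z zt lamk ε η r) (hlam : 0 < lam)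
    (k : ℕ) (v : E) : lamk (k + 1) * ⟪r (k + 1), v⟫ = ⟪g (z k) - g (z (k + 1)), v⟫ := by
  have : lamk (k + 1) ≠ 0 := (hlam.trans_le (h.le_lamk _)).ne'
  rw [h.residual_eq, real_inner_smul_left]
  field_simp

theorem inner_residual_le (h : IsNEHPESeq w g Zs S T lam σ τ z zt lamk ε η r)
    (hreg : IsRegularDGF w g Zs p m M) (hM : 0 ≤ M) (hlam : 0 < lam) (k : ℕ) (u : E) :
    ⟪r (k + 1), u⟫ ≤ M / lam * p (z k - z (k + 1)) * p u := by
  have hlamk := hlam.trans_le (h.le_lamk (k + 1))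
  have hbound := hreg.upper _ (h.mem_z k) _ (h.mem_z (k + 1)) u
  rw [← h.mul_inner_residual hlam] at hbound
  calc ⟪r (k + 1), u⟫ ≤ M * p (z k - z (k + 1)) * p u / lamk (k + 1) := by
        rw [le_div_iff₀ hlamk]; linarith
    _ ≤ M * p (z k - z (k + 1)) * p u / lam := by
        gcongr
        exact h.le_lamk _
    _ = M / lam * p (z k - z (k + 1)) * p u := by ring

theorem bregman_add_le (h : IsNEHPESeq w g Zs S T lam σ τ z zt lamk ε η r)
    (hreg : IsRegularDGF w g Zs p m M) (hm : 0 ≤ m) (hS : IsStronglyMonotoneWrt S w g μ Zs)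
    (hμ : 0 ≤ μ) (hlam : 0 < lam) {zs a b : E} (hzs : zs ∈ Zs) (ha : a ∈ S zs) (hb : b ∈ T zs)
    (hab : a + b = 0) (k : ℕ) :
    bregman w g (z (k + 1)) zs + η (k + 1) + (1 - σ) * bregman w g (z k) (zt (k + 1)) +
        lam * μ * (bregman w g (zt (k + 1)) zs + bregman w g zs (zt (k + 1))) ≤
      bregman w g (z k) zs + (1 - τ) * η k := by
  obtain ⟨ra, rb, hra, hrb, hr⟩ := h.residual_mem k
  have hinner := hS.le_inner_add (h.mem_zt _) hzs hra hrb ha hb hab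
  rw [← hr] at hinner
  have hid := bregman_four_point (w := w) (g := g) (z k) (z (k + 1)) (zt (k + 1)) zs
  rw [← h.mul_inner_residual hlam] at hid
  have hYZ := add_nonneg (hreg.bregman_nonneg hm (h.mem_zt (k + 1)) hzs)
    (hreg.bregman_nonneg hm hzs (h.mem_zt (k + 1)))
  have hlamk := hlam.trans_le (h.le_lamk (k + 1))
  nlinarith [mul_le_mul_of_nonneg_left hinner hlamk.le, h.error_le k,
    mul_le_mul_of_nonneg_right (h.le_lamk (k + 1)) (mul_nonneg hμ hYZ)]

theorem bregman_add_eta_le_pow (h : IsNEHPESeq w g Zs S T lam σ τ z zt lamk ε η r)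
    (hreg : IsRegularDGF w g Zs p m M) (hm : 0 < m) (hM : 0 < M)
    (hS : IsStronglyMonotoneWrt S w g μ Zs) (hμ : 0 < μ) (hlam : 0 < lam) (hσ : σ < 1)
    (ht0 : 0 ≤ t) (ht1 : t ≤ 1) (ht : t ≤ min (m / M * (1 / (1 - σ) + 1 / (μ * lam))⁻¹) τ)
    {zs a b : E} (hzs : zs ∈ Zs) (ha : a ∈ S zs) (hb : b ∈ T zs) (hab : a + b = 0) (k : ℕ) :
    bregman w g (z k) zs + η k ≤ (1 - t) ^ k * (bregman w g (z 0) zs + η 0) := by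
  refine le_geom (u := fun k => bregman w g (z k) zs + η k) (sub_nonneg.2 ht1) k fun i _ => ?_
  have hstep := h.bregman_add_le hreg hm.le hS hμ.le hlam hzs ha hb hab i
  have hkey := hreg.mul_bregman_le hm hM (sub_pos.2 hσ) (mul_pos hμ hlam) ht0
    (ht.trans (min_le_left _ _)) (h.mem_z i) (h.mem_zt (i + 1)) hzs
  have hη := mul_le_mul_of_nonneg_right (ht.trans (min_le_right _ _)) (h.eta_nonneg i)
  nlinarith

theorem mul_sq_seminorm_sub_le (h : IsNEHPESeq w g Zs S T lam σ τ z zt lamk ε η r)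
    (hreg : IsRegularDGF w g Zs p m M) (hm : 0 ≤ m) (ht0 : 0 ≤ t) (ht1 : t ≤ 1) {zs : E}
    (hzs : zs ∈ Zs)
    (hgeom : ∀ k, bregman w g (z k) zs + η k ≤ (1 - t) ^ k * (bregman w g (z 0) zs + η 0))
    (k : ℕ) :
    m * p (z k - z (k + 1)) ^ 2 ≤ 8 * (1 - t) ^ k * (bregman w g (z 0) zs + η 0) := by
  have hpow : (1 - t) ^ (k + 1) ≤ (1 - t) ^ k :=
    pow_le_pow_of_le_one (sub_nonneg.2 ht1) (by linarith) k.le_succ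
  have h0 : 0 ≤ bregman w g (z 0) zs + η 0 :=
    add_nonneg (hreg.bregman_nonneg hm (h.mem_z 0) hzs) (h.eta_nonneg 0)
  nlinarith [hreg.mul_sq_seminorm_sub_le hm (h.mem_z k) (h.mem_z (k + 1)) hzs, hgeom k,
    hgeom (k + 1), h.eta_nonneg k, h.eta_nonneg (k + 1), mul_le_mul_of_nonneg_right hpow h0]

theorem mul_eps_le (h : IsNEHPESeq w g Zs S T lam σ τ z zt lamk ε η r)
    (hreg : IsRegularDGF w g Zs p m M) (hm : 0 ≤ m) (hS : IsStronglyMonotoneWrt S w g μ Zs)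
    (hμ : 0 ≤ μ) (hlam : 0 < lam) (hσ0 : 0 ≤ σ) (hσ1 : σ < 1) (hτ : 0 ≤ τ) {zs a b : E}
    (hzs : zs ∈ Zs) (ha : a ∈ S zs) (hb : b ∈ T zs) (hab : a + b = 0)
    (hgeom : ∀ k, bregman w g (z k) zs + η k ≤ (1 - t) ^ k * (bregman w g (z 0) zs + η 0))
    (k : ℕ) :
    lam * (1 - σ) * ε (k + 1) ≤ (1 - t) ^ k * (bregman w g (z 0) zs + η 0) := by
  have hYZ := add_nonneg (hreg.bregman_nonneg hm (h.mem_zt (k + 1)) hzs)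
    (hreg.bregman_nonneg hm hzs (h.mem_zt (k + 1)))
  have hX : (1 - σ) * bregman w g (z k) (zt (k + 1)) ≤ bregman w g (z k) zs + η k := by
    nlinarith [h.bregman_add_le hreg hm hS hμ hlam hzs ha hb hab k, h.eta_nonneg (k + 1),
      hreg.bregman_nonneg hm (h.mem_z (k + 1)) hzs, mul_nonneg hlam.le (mul_nonneg hμ hYZ),
      mul_nonneg hτ (h.eta_nonneg k)]
  have hε : lamk (k + 1) * ε (k + 1) ≤ σ * bregman w g (z k) (zt (k + 1)) + η k := by
    nlinarith [h.error_le k, h.eta_nonneg (k + 1), mul_nonneg hτ (h.eta_nonneg k),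
      hreg.bregman_nonneg hm (h.mem_z (k + 1)) (h.mem_zt (k + 1))]
  calc lam * (1 - σ) * ε (k + 1) ≤ (1 - σ) * (lamk (k + 1) * ε (k + 1)) := by
        nlinarith [mul_le_mul_of_nonneg_right (h.le_lamk (k + 1)) (h.eps_nonneg (k + 1))]
    _ ≤ (1 - σ) * (σ * bregman w g (z k) (zt (k + 1)) + η k) := by gcongr
    _ ≤ bregman w g (z k) zs + η k := by
        nlinarith [mul_le_mul_of_nonneg_left hX hσ0, hreg.bregman_nonneg hm (h.mem_z k) hzs]
    _ ≤ (1 - t) ^ k * (bregman w g (z 0) zs + η 0) := hgeom k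

end IsNEHPESeq

end Framework

theorem stmt14_general {E : Type*} [NormedAddCommGroup E] [InnerProductSpace ℝ E]
    (w : E → ℝ) (g : E → E) (Zs : Set E) (p : Seminorm ℝ E)
    (m M : ℝ) (hm : 0 < m) (hM : 0 < M)
    (D : E → E → ℝ)
    (hD : ∀ z z' : E, D z z' = w z' - w z - ⟪g z, z' - z⟫)
    (hreg1 : ∀ z ∈ Zs, ∀ z' ∈ Zs, m / 2 * p (z - z') ^ 2 ≤ D z z')
    (hreg2 : ∀ z ∈ Zs, ∀ z' ∈ Zs, ∀ u : E, ⟪g z - g z', u⟫ ≤ M * p (z - z') * p u)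
    (S T : E → Set E) (μ lam σ τ : ℝ)
    (hμ : 0 < μ) (hlam : 0 < lam) (hσ0 : 0 ≤ σ) (hσ1 : σ < 1) (hτ0 : 0 < τ) (hτ1 : τ < 1)
    (hDomT : ∀ x : E, (T x).Nonempty → x ∈ Zs)
    (hSmono : ∀ z ∈ Zs, ∀ z' ∈ Zs, ∀ s ∈ S z, ∀ s' ∈ S z',
      μ * (D z z' + D z' z) ≤ ⟪z - z', s - s'⟫)
    (zk ztlk : ℕ → E) (lamk εk ηk : ℕ → ℝ) (rk : ℕ → E)
    (hzZ : ∀ k, zk k ∈ Zs) (hztlZ : ∀ k, ztlk k ∈ Zs)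
    (hlamk : ∀ k, lam ≤ lamk k) (hε : ∀ k, 0 ≤ εk k) (hη : ∀ k, 0 ≤ ηk k)
    (hrk : ∀ k : ℕ, 1 ≤ k → rk k = (1 / lamk k) • (g (zk (k - 1)) - g (zk k)))
    (hincl : ∀ k : ℕ, 1 ≤ k → ∃ ra rb : E, ra ∈ S (ztlk k) ∧
      (∀ z' v' : E, v' ∈ T z' → -(εk k) ≤ ⟪rb - v', ztlk k - z'⟫) ∧
      rk k = ra + rb)
    (herr : ∀ k : ℕ, 1 ≤ k →
      D (zk k) (ztlk k) + lamk k * εk k + ηk k ≤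
        σ * D (zk (k - 1)) (ztlk k) + (1 - τ) * ηk (k - 1))
    (hsolne : ∃ zstar : E, ∃ a b : E, a ∈ S zstar ∧ b ∈ T zstar ∧ a + b = 0)
    (tlow : ℝ)
    (htlow : tlow = min (m / M * (1 / (1 - σ) + 1 / (μ * lam))⁻¹) τ)
    (d0 : ℝ)
    (hd0 : d0 = sInf {x : ℝ | ∃ zstar : E,
      (∃ a b : E, a ∈ S zstar ∧ b ∈ T zstar ∧ a + b = 0) ∧ x = D (zk 0) zstar}) :
    ∀ k : ℕ, 1 ≤ k →
      (∀ u : E, ⟪rk k, u⟫ ≤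
        2 * Real.sqrt 2 * M / (lam * Real.sqrt m) *
          (1 - tlow) ^ (((k : ℝ) - 1) / 2) * Real.sqrt (d0 + ηk 0) * p u) ∧
      εk k ≤ 1 / (lam * (1 - σ)) * (1 - tlow) ^ (k - 1) * (d0 + ηk 0) := by
  intro k hk
  obtain ⟨k, rfl⟩ : ∃ j, k = j + 1 := ⟨k - 1, by omega⟩
  obtain rfl : D = bregman w g := funext fun z => funext (hD z)
  subst hd0
  have hreg : IsRegularDGF w g Zs p m M := ⟨hreg1, hreg2⟩
  have hseq : IsNEHPESeq w g Zs S T lam σ τ zk ztlk lamk εk ηk rk :=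
    ⟨hzZ, hztlZ, hlamk, hε, hη, fun k => hrk (k + 1) k.succ_pos,
      fun k => hincl (k + 1) k.succ_pos, fun k => herr (k + 1) k.succ_pos⟩
  have ht0 : 0 < tlow := htlow ▸ lt_min (mul_pos (div_pos hm hM) (inv_pos.2 (add_pos
    (one_div_pos.2 (sub_pos.2 hσ1)) (one_div_pos.2 (mul_pos hμ hlam))))) hτ0
  have ht1 : tlow < 1 := (htlow ▸ min_le_right _ _ : tlow ≤ τ).trans_lt hτ1
  have hsol : ∀ x ∈ {x : ℝ | ∃ zstar : E,
      (∃ a b : E, a ∈ S zstar ∧ b ∈ T zstar ∧ a + b = 0) ∧ x = bregman w g (zk 0) zstar},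
      m * p (zk k - zk (k + 1)) ^ 2 ≤ 8 * (1 - tlow) ^ k * (x + ηk 0) ∧
        lam * (1 - σ) * εk (k + 1) ≤ (1 - tlow) ^ k * (x + ηk 0) := by
    rintro _ ⟨zs, ⟨a, b, ha, hb, hab⟩, rfl⟩
    have hzs := hDomT zs ⟨b, hb⟩
    have hgeom := hseq.bregman_add_eta_le_pow hreg hm hM hSmono hμ hlam hσ1 ht0.le ht1.le
      htlow.le hzs ha hb hab
    exact ⟨hseq.mul_sq_seminorm_sub_le hreg hm.le ht0.le ht1.le hzs hgeom k,
      hseq.mul_eps_le hreg hm.le hSmono hμ.le hlam hσ0 hσ1 hτ0.le hzs ha hb hab hgeom k⟩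
  obtain ⟨zs, hzs⟩ := hsolne
  have hdist := le_mul_csInf_add (fun x hx => (hsol x hx).1) ⟨_, zs, hzs, rfl⟩
    (mul_pos (by norm_num) (pow_pos (sub_pos.2 ht1) k))
  have heps := le_mul_csInf_add (fun x hx => (hsol x hx).2) ⟨_, zs, hzs, rfl⟩
    (pow_pos (sub_pos.2 ht1) k)
  refine ⟨fun u => (hseq.inner_residual_le hreg hM.le hlam k u).trans ?_, ?_⟩
  · have hp := le_two_mul_sqrt_two_div_sqrt_mul_sqrt hm (hdist.trans_eq (mul_assoc _ _ _))
    rw [Real.sqrt_mul (pow_nonneg (sub_nonneg.2 ht1.le) k)] at hp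
    rw [rpow_natCast_add_one_sub_one_div_two (sub_nonneg.2 ht1.le)]
    calc M / lam * p (zk k - zk (k + 1)) * p u
        ≤ M / lam * (2 * √2 / √m * (√((1 - tlow) ^ k) * √_)) * p u := by gcongr
      _ = _ := by ring
  · rw [Nat.add_sub_cancel, mul_assoc, one_div_mul_eq_div,
      le_div_iff₀' (mul_pos hlam (sub_pos.2 hσ1))]
    exact heps

/-- Pointwise residual bound for the regularized NE-HPE framework: under the setting of
the contraction result, for every `k ≥ 1`,
`‖r_k‖* ≤ (2√2 M/(λ√m)) (1-τ̲)^{(k-1)/2} (d̲₀+η₀)^{1/2}` (dual seminorm bound expressed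
pointwise against all `u`) and `ε_k ≤ (1/(λ(1-σ)))(1-τ̲)^{k-1}(d̲₀+η₀)`, where
`d̲₀ = inf{(dw)_{z₀}(z) : 0 ∈ (S+T)(z)}`. -/
theorem stmt14 {E : Type*} [NormedAddCommGroup E] [InnerProductSpace ℝ E]
    [FiniteDimensional ℝ E]
    (w : E → ℝ) (g : E → E) (Zs : Set E) (p : Seminorm ℝ E)
    (m M : ℝ) (hm : 0 < m) (hM : 0 < M)
    (hZconv : Convex ℝ Zs)
    (hg : ∀ z ∈ Zs, HasGradientAt w (g z) z)
    (D : E → E → ℝ)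
    (hD : ∀ z z' : E, D z z' = w z' - w z - ⟪g z, z' - z⟫)
    (hreg1 : ∀ z ∈ Zs, ∀ z' ∈ Zs, m / 2 * p (z - z') ^ 2 ≤ D z z')
    (hreg2 : ∀ z ∈ Zs, ∀ z' ∈ Zs, ∀ u : E, ⟪g z - g z', u⟫ ≤ M * p (z - z') * p u)
    (S T : E → Set E) (μ lam σ τ : ℝ)
    (hμ : 0 < μ) (hlam : 0 < lam) (hσ0 : 0 ≤ σ) (hσ1 : σ < 1) (hτ0 : 0 < τ) (hτ1 : τ < 1)
    (hDomT : ∀ x : E, (T x).Nonempty → x ∈ Zs)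
    (hSmono : ∀ z ∈ Zs, ∀ z' ∈ Zs, ∀ s ∈ S z, ∀ s' ∈ S z',
      μ * (D z z' + D z' z) ≤ ⟪z - z', s - s'⟫)
    (hTmono : ∀ z z' v v' : E, v ∈ T z → v' ∈ T z' → 0 ≤ ⟪z - z', v - v'⟫)
    (zk ztlk : ℕ → E) (lamk εk ηk : ℕ → ℝ) (rk : ℕ → E)
    (hzZ : ∀ k, zk k ∈ Zs) (hztlZ : ∀ k, ztlk k ∈ Zs)
    (hlamk : ∀ k, lam ≤ lamk k) (hε : ∀ k, 0 ≤ εk k) (hη : ∀ k, 0 ≤ ηk k)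
    (hrk : ∀ k : ℕ, 1 ≤ k → rk k = (1 / lamk k) • (g (zk (k - 1)) - g (zk k)))
    (hincl : ∀ k : ℕ, 1 ≤ k → ∃ ra rb : E, ra ∈ S (ztlk k) ∧
      (∀ z' v' : E, v' ∈ T z' → -(εk k) ≤ ⟪rb - v', ztlk k - z'⟫) ∧
      rk k = ra + rb)
    (herr : ∀ k : ℕ, 1 ≤ k →
      D (zk k) (ztlk k) + lamk k * εk k + ηk k ≤
        σ * D (zk (k - 1)) (ztlk k) + (1 - τ) * ηk (k - 1))
    (hsolne : ∃ zstar : E, ∃ a b : E, a ∈ S zstar ∧ b ∈ T zstar ∧ a + b = 0)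
    (tlow : ℝ)
    (htlow : tlow = min (m / M * (1 / (1 - σ) + 1 / (μ * lam))⁻¹) τ)
    (d0 : ℝ)
    (hd0 : d0 = sInf {x : ℝ | ∃ zstar : E,
      (∃ a b : E, a ∈ S zstar ∧ b ∈ T zstar ∧ a + b = 0) ∧ x = D (zk 0) zstar}) :
    ∀ k : ℕ, 1 ≤ k →
      (∀ u : E, ⟪rk k, u⟫ ≤
        2 * Real.sqrt 2 * M / (lam * Real.sqrt m) *
          (1 - tlow) ^ (((k : ℝ) - 1) / 2) * Real.sqrt (d0 + ηk 0) * p u) ∧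
      εk k ≤ 1 / (lam * (1 - σ)) * (1 - tlow) ^ (k - 1) * (d0 + ηk 0) :=
  stmt14_general w g Zs p m M hm hM D hD hreg1 hreg2 S T μ lam σ τ hμ hlam hσ0 hσ1 hτ0 hτ1 hDomT
    hSmono zk ztlk lamk εk ηk rk hzZ hztlZ hlamk hε hη hrk hincl herr hsolne tlow htlow d0 hd0
end

section
/- (Regularization does not increase the distance to the solution set) Let T be a monotone operator with 0 ∈ T(z*) for some z*, let w be a distance generating function, z₀ ∈ int(dom w), μ > 0, and suppose z*_μ satisfies 0 ∈ T(z*_μ) + μ(∇w(z*_μ) - ∇w(z₀)). Then (dw)_{z₀}(z*_μ) ≤ (dw)_{z₀}(z*). Consequently, inf{(dw)_{z₀}(z) : z ∈ Z*_μ} ≤ inf{(dw)_{z₀}(z) : 0 ∈ T(z)} where Z*_μ is the solution set of the regularized inclusion. -/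
/-!
Monotonicity of `T`, tested at `z*` (where `0 ∈ T z*`) and at `z*_μ` (where
`-μ (∇w(z*_μ) - ∇w(z₀)) ∈ T z*_μ`), gives `⟪∇w(z*_μ) - ∇w(z₀), z* - z*_μ⟫ ≥ 0`. The three-point
identity `(dw)_{z₀}(z*) = (dw)_{z₀}(z*_μ) + (dw)_{z*_μ}(z*) + ⟪∇w(z*_μ) - ∇w(z₀), z* - z*_μ⟫`
and nonnegativity of Bregman distances of a convex function then give the claim.
-/

open RealInnerProductSpace

theorem ConvexOn.add_fderiv_le {E : Type*} [NormedAddCommGroup E] [NormedSpace ℝ E]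
    {s : Set E} {f : E → ℝ} {f' : E →L[ℝ] ℝ} {x y : E} (hf : ConvexOn ℝ s f)
    (hx : x ∈ s) (hy : y ∈ s) (hf' : HasFDerivAt f f' x) : f x + f' (y - x) ≤ f y := by
  have hline : HasDerivAt (AffineMap.lineMap x y : ℝ → E) (y - x) 0 :=
    AffineMap.hasDerivAt_lineMap
  have hderiv : HasDerivAt (f ∘ AffineMap.lineMap (k := ℝ) x y) (f' (y - x)) 0 := by
    simpa using hf'.comp_hasDerivAt_of_eq 0 hline (by simp)
  have := (hf.comp_affineMap _).le_slope_of_hasDerivAt (by simpa using hx) (by simpa using hy)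
    one_pos hderiv
  simpa [slope_def_field, map_sub, le_sub_iff_add_le'] using this

theorem ConvexOn.add_inner_le_of_hasGradientAt {E : Type*} [NormedAddCommGroup E]
    [InnerProductSpace ℝ E] [CompleteSpace E] {s : Set E} {f : E → ℝ} {f' x y : E}
    (hf : ConvexOn ℝ s f) (hx : x ∈ s) (hy : y ∈ s) (hf' : HasGradientAt f f' x) :
    f x + ⟪f', y - x⟫ ≤ f y := by
  simpa using hf.add_fderiv_le hx hy hf'.hasFDerivAt

section Bregman

variable {E : Type*} [NormedAddCommGroup E] [InnerProductSpace ℝ E]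

/-- The paper's `(dw)_z(z')`, with `g` playing the role of `∇w`. -/
def bregmanDiv (w : E → ℝ) (g : E → E) (z z' : E) : ℝ :=
  w z' - w z - ⟪g z, z' - z⟫

variable {w : E → ℝ} {g : E → E}

theorem bregmanDiv_nonneg [CompleteSpace E] {s : Set E} {z z' : E} (hw : ConvexOn ℝ s w)
    (hz : z ∈ s) (hz' : z' ∈ s) (hg : HasGradientAt w (g z) z) : 0 ≤ bregmanDiv w g z z' := by
  have := hw.add_inner_le_of_hasGradientAt hz hz' hg
  unfold bregmanDiv
  linarith

theorem bregmanDiv_eq_add_add_inner (x y z : E) :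
    bregmanDiv w g x z = bregmanDiv w g x y + bregmanDiv w g y z + ⟪g y - g x, z - y⟫ := by
  have hsplit : z - x = (z - y) + (y - x) := by abel
  simp only [bregmanDiv, hsplit, inner_add_right, inner_sub_left]
  ring

theorem bregmanDiv_le_of_inner_nonneg [CompleteSpace E] {x y z : E} (hw : ConvexOn ℝ Set.univ w)
    (hg : HasGradientAt w (g y) y) (hxyz : 0 ≤ ⟪g y - g x, z - y⟫) :
    bregmanDiv w g x y ≤ bregmanDiv w g x z := by
  have := bregmanDiv_nonneg (z' := z) hw (Set.mem_univ y) (Set.mem_univ z) hg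
  rw [bregmanDiv_eq_add_add_inner x y z]
  linarith

end Bregman

theorem inner_nonneg_of_neg_smul_mem_of_zero_mem {E : Type*} [NormedAddCommGroup E]
    [InnerProductSpace ℝ E] {T : E → Set E}
    (hT : ∀ z z' v v' : E, v ∈ T z → v' ∈ T z' → 0 ≤ ⟪z - z', v - v'⟫)
    {μ : ℝ} (hμ : 0 < μ) {v y z : E} (hy : -(μ • v) ∈ T y) (hz : (0 : E) ∈ T z) :
    0 ≤ ⟪v, z - y⟫ := by
  have := hT z y 0 (-(μ • v)) hz hy
  rw [zero_sub, neg_neg, real_inner_smul_right, real_inner_comm] at this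
  exact nonneg_of_mul_nonneg_right this hμ

/-- Regularization does not increase the Bregman distance to the solution set: if `T` is
monotone, `0 ∈ T(z*)` and `0 ∈ T(z*_μ) + μ(∇w(z*_μ) - ∇w(z₀))`, then
`(dw)_{z₀}(z*_μ) ≤ (dw)_{z₀}(z*)`; consequently
`inf{(dw)_{z₀}(z) : z ∈ Z*_μ} ≤ inf{(dw)_{z₀}(z) : 0 ∈ T(z)}`. -/
theorem stmt15 {E : Type*} [NormedAddCommGroup E] [InnerProductSpace ℝ E]
    [FiniteDimensional ℝ E]
    (w : E → ℝ) (g : E → E)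
    (hconv : ConvexOn ℝ Set.univ w)
    (hg : ∀ x : E, HasGradientAt w (g x) x)
    (D : E → E → ℝ)
    (hD : ∀ z z' : E, D z z' = w z' - w z - ⟪g z, z' - z⟫)
    (T : E → Set E)
    (hTmono : ∀ z z' v v' : E, v ∈ T z → v' ∈ T z' → 0 ≤ ⟪z - z', v - v'⟫)
    (μ : ℝ) (hμ : 0 < μ) (z0 : E)
    (Zmu : Set E) (hZmu : Zmu = {zz : E | -(μ • (g zz - g z0)) ∈ T zz})
    (zstar zmu : E) (hzstar : (0 : E) ∈ T zstar) (hzmu : zmu ∈ Zmu) :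
    D z0 zmu ≤ D z0 zstar ∧
    sInf ((fun zz => D z0 zz) '' Zmu) ≤
      sInf {x : ℝ | ∃ zz : E, (0 : E) ∈ T zz ∧ x = D z0 zz} := by
  obtain rfl : D = bregmanDiv w g := funext₂ hD
  subst hZmu
  have hmin : ∀ z, (0 : E) ∈ T z → bregmanDiv w g z0 zmu ≤ bregmanDiv w g z0 z := fun z hz =>
    bregmanDiv_le_of_inner_nonneg hconv (hg zmu)
      (inner_nonneg_of_neg_smul_mem_of_zero_mem hTmono hμ hzmu hz)
  refine ⟨hmin zstar hzstar, le_csInf ⟨_, zstar, hzstar, rfl⟩ ?_⟩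
  rintro _ ⟨z, hz, rfl⟩
  have hbdd : BddBelow (bregmanDiv w g z0 '' {zz | -(μ • (g zz - g z0)) ∈ T zz}) :=
    ⟨0, Set.forall_mem_image.2 fun z' _ =>
      bregmanDiv_nonneg hconv (Set.mem_univ z0) (Set.mem_univ z') (hg z0)⟩
  exact (csInf_le hbdd ⟨zmu, hzmu, rfl⟩).trans (hmin z hz)
end
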